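/- arXiv:1702.03625 — 3 statements merged into one kernel-verified Lean document; each statement's English description precedes it below -/
import Mathlib

section
/- For all real numbers a ≥ 0, b ≥ 0 and every positive integer d, we have (b+1)·(a/d + 1)^d ≤ ((a+b)/(d+1) + 1)^(d+1). -/
theorem stmt_0 (a b : ℝ) (ha : 0 ≤ a) (hb : 0 ≤ b) (d : ℕ) (hd : 0 < d) :
    (b + 1) * (a / d + 1) ^ d ≤ ((a + b) / (d + 1) + 1) ^ (d + 1) := by
  have hD : (0:ℝ) < d := by exact_mod_cast hd
  have hd1 : ((d:ℝ)+1) ≠ 0 := by positivity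
  set x : ℝ := a / d + 1 with hx
  set y : ℝ := b + 1 with hy
  have hx0 : 0 ≤ x := by positivity
  have hy0 : 0 ≤ y := by positivity
  have hw1 : (0:ℝ) ≤ (d:ℝ)/((d:ℝ)+1) := by positivity
  have hw2 : (0:ℝ) ≤ 1/((d:ℝ)+1) := by positivity
  have hsum : (d:ℝ)/((d:ℝ)+1) + 1/((d:ℝ)+1) = 1 := by field_simp
  have h := Real.geom_mean_le_arith_mean2_weighted hw1 hw2 hx0 hy0 hsum
  have h2 := pow_le_pow_left₀ (by positivity) h (d+1)
  have hL : (x ^ ((d:ℝ)/((d:ℝ)+1)) * y ^ (1/((d:ℝ)+1))) ^ (d+1) = x ^ d * y := by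
    rw [mul_pow, ← Real.rpow_natCast (x ^ ((d:ℝ)/((d:ℝ)+1))) (d+1),
        ← Real.rpow_natCast (y ^ (1/((d:ℝ)+1))) (d+1),
        ← Real.rpow_mul hx0, ← Real.rpow_mul hy0]
    push_cast
    rw [div_mul_cancel₀ _ hd1, one_div, inv_mul_cancel₀ hd1, Real.rpow_natCast,
        Real.rpow_one]
  have hR : (d:ℝ)/((d:ℝ)+1) * x + 1/((d:ℝ)+1) * y = (a + b)/((d:ℝ)+1) + 1 := by
    rw [hx, hy]
    field_simp
    ring
  rw [hL, hR] at h2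
  calc (b + 1) * (a / d + 1) ^ d = x ^ d * y := by rw [hx, hy]; ring
    _ ≤ ((a + b)/((d:ℝ)+1) + 1) ^ (d+1) := h2
    _ = ((a + b) / ((d:ℕ) + 1 : ℝ) + 1) ^ (d + 1) := by norm_num
end

section
/- Fix a real a ≥ 0 and positive integer d, and define p(b) = ((a+b)/(d+1) + 1)^(d+1) − (b+1)·(a/d + 1)^d. Then p attains its minimum over b ≥ 0 at b = a/d and p(a/d) = 0; in particular p(b) ≥ 0 for all b ≥ 0. -/
lemma amgm_pow (n : ℕ) (x y : ℝ) (hx : 0 ≤ x) (hy : 0 ≤ y) :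
    x ^ n * y ≤ ((n * x + y) / (n + 1)) ^ (n + 1) := by
  have hn1 : (0:ℝ) < (n:ℝ) + 1 := by positivity
  have hw1 : (0:ℝ) ≤ (n:ℝ) / ((n:ℝ)+1) := by positivity
  have hw2 : (0:ℝ) ≤ 1 / ((n:ℝ)+1) := by positivity
  have hsum : (n:ℝ)/((n:ℝ)+1) + 1/((n:ℝ)+1) = 1 := by field_simp
  have h := Real.geom_mean_le_arith_mean2_weighted hw1 hw2 hx hy hsum
  have hm : (n:ℝ)/((n:ℝ)+1)*x + 1/((n:ℝ)+1)*y = ((n:ℝ)*x + y)/((n:ℝ)+1) := by ring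
  rw [hm] at h
  have hL : 0 ≤ x ^ ((n:ℝ)/((n:ℝ)+1)) * y ^ ((1:ℝ)/((n:ℝ)+1)) := by positivity
  have h2 := pow_le_pow_left₀ hL h (n+1)
  calc x ^ n * y
      = (x ^ ((n:ℝ)/((n:ℝ)+1)) * y ^ ((1:ℝ)/((n:ℝ)+1))) ^ (n+1) := by
        rw [mul_pow, ← Real.rpow_natCast (x ^ ((n:ℝ)/((n:ℝ)+1))),
          ← Real.rpow_natCast (y ^ ((1:ℝ)/((n:ℝ)+1))),
          ← Real.rpow_mul hx, ← Real.rpow_mul hy]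
        push_cast
        rw [div_mul_cancel₀ _ (ne_of_gt hn1), div_mul_cancel₀ _ (ne_of_gt hn1),
          Real.rpow_natCast, Real.rpow_one]
    _ ≤ (((n:ℝ)*x + y)/((n:ℝ)+1)) ^ (n+1) := h2

theorem stmt_2 (a : ℝ) (ha : 0 ≤ a) (d : ℕ) (hd : 0 < d) :
    IsMinOn (fun b : ℝ => ((a + b) / (d + 1) + 1) ^ (d + 1) - (b + 1) * (a / d + 1) ^ d)
      (Set.Ici 0) (a / d) ∧
    ((a + a / d) / (d + 1) + 1) ^ (d + 1) - (a / d + 1) * (a / d + 1) ^ d = 0 ∧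
    ∀ b : ℝ, 0 ≤ b →
      0 ≤ ((a + b) / (d + 1) + 1) ^ (d + 1) - (b + 1) * (a / d + 1) ^ d := by
  have hd0 : (d:ℝ) ≠ 0 := Nat.cast_ne_zero.mpr hd.ne'
  have hd1 : (0:ℝ) < (d:ℝ) + 1 := by positivity
  have hx : (0:ℝ) ≤ a / d + 1 := by positivity
  have key : ∀ b : ℝ, 0 ≤ b →
      0 ≤ ((a + b) / (d + 1) + 1) ^ (d + 1) - (b + 1) * (a / d + 1) ^ d := by
    intro b hb
    have h := amgm_pow d (a / d + 1) (b + 1) hx (by linarith)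
    have hmean : ((d:ℝ) * (a / d + 1) + (b + 1)) / ((d:ℝ) + 1) = (a + b) / (d + 1) + 1 := by
      field_simp
      ring
    rw [hmean] at h
    linarith
  have heq : ((a + a / d) / (d + 1) + 1) ^ (d + 1) - (a / d + 1) * (a / d + 1) ^ d = 0 := by
    have : (a + a / d) / ((d:ℝ) + 1) + 1 = a / d + 1 := by
      field_simp
    rw [this, pow_succ, mul_comm]
    ring
  refine ⟨?_, heq, key⟩
  intro b hb
  simp only [Set.mem_Ici] at hb
  simp only [Set.mem_setOf_eq]
  have := key b hb
  calc ((a + a/d) / (d + 1) + 1) ^ (d + 1) - (a/d + 1) * (a/d + 1) ^ d = 0 := heq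
    _ ≤ _ := this
end

section
/- For every natural number m ≥ 1 and every real ε ∈ (0,1), there is a random polynomial P over F₂ in m variables of degree at most ⌈log₂(1/ε)⌉ such that for every x ∈ {0,1}^m, Pr[P(x) = OR_m(x)] ≥ 1 − ε, where OR_m(x) = 1 iff some coordinate of x is 1. Explicitly, one may take P(x) = 1 − Π_{j=1}^{k} (1 − Σ_i r_{j,i} x_i) with k = ⌈log₂(1/ε)⌉ and r_{j,i} independent uniform bits in F₂. -/
open Finset

/-- Evaluation of an `F₂`-polynomial at a Boolean point. -/
noncomputable def evalBool {m : ℕ} (P : MvPolynomial (Fin m) (ZMod 2)) (x : Fin m → Bool) : ZMod 2 :=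
  MvPolynomial.eval (fun i => if x i then 1 else 0) P

/-- The OR function on `m` bits, valued in `F₂`. -/
def ORval (m : ℕ) (x : Fin m → Bool) : ZMod 2 :=
  if ∃ i, x i = true then 1 else 0

/-!
For `x ≠ 0` the map `r ↦ r ⬝ᵥ x` is a surjective linear functional on `F₂^m`, so a uniform
random row `r` has `r ⬝ᵥ x = 0` with probability exactly `1/2`. Over `F₂`,
`1 - ∏ⱼ (1 - rⱼ ⬝ᵥ x)` vanishes iff every `rⱼ ⬝ᵥ x` does, so with `k` independent rows
the polynomial errs with probability `2⁻ᵏ ≤ ε`; at `x = 0` it is always correct.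
The random polynomial is the uniform distribution on the `N = 2^(k m)` choices of the rows,
enumerated by `Fin N`.
-/

open MvPolynomial

section KernelCount

variable {ι κ F : Type*} [Fintype ι] [DecidableEq ι] [Fintype κ] [DecidableEq κ]
  [Field F] [Fintype F] [DecidableEq F]

lemma card_filter_dotProduct_eq_zero_mul_card {b : ι → F} (hb : b ≠ 0) :
    #{r : ι → F | r ⬝ᵥ b = 0} * Fintype.card F = Fintype.card F ^ Fintype.card ι := by
  obtain ⟨i₀, hi₀⟩ := Function.ne_iff.mp hb
  let f : (ι → F) →+ F := AddMonoidHom.mk' (· ⬝ᵥ b) fun r s => add_dotProduct r s b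
  have hf : Function.Surjective f := fun c =>
    ⟨Pi.single i₀ (c / b i₀), by simp [f, single_dotProduct, div_mul_cancel₀ _ hi₀]⟩
  have key := f.ker.card_mul_index
  rw [AddSubgroup.index_ker, AddMonoidHom.range_eq_top.mpr hf] at key
  simpa [Nat.card_eq_fintype_card, Fintype.card_fun, f, ← Fintype.card_subtype] using key

lemma card_filter_forall_apply_eq_pow {α : Type*} [Fintype α] (p : α → Prop) [DecidablePred p] :
    #{r : κ → α | ∀ j, p (r j)} = #{v | p v} ^ Fintype.card κ := by
  rw [← Fintype.card_subtype, ← Fintype.card_subtype,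
    Fintype.card_congr (Equiv.subtypePiEquivPi (p := fun _ => p)), Fintype.card_fun]

lemma card_filter_forall_dotProduct_eq_zero_mul {b : ι → F} (hb : b ≠ 0) :
    #{r : κ → ι → F | ∀ j, r j ⬝ᵥ b = 0} * Fintype.card F ^ Fintype.card κ =
      Fintype.card (κ → ι → F) := by
  rw [card_filter_forall_apply_eq_pow (· ⬝ᵥ b = 0), ← mul_pow,
    card_filter_dotProduct_eq_zero_mul_card hb, Fintype.card_fun, Fintype.card_fun, ← pow_mul]

end KernelCount

section OrPolynomial

variable {σ κ R : Type*} [CommRing R]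

lemma totalDegree_one_sub_le (p : MvPolynomial σ R) : (1 - p).totalDegree ≤ p.totalDegree :=
  (totalDegree_sub 1 p).trans (by simp)

variable [Fintype σ] [Fintype κ]

noncomputable def linearForm (r : σ → R) : MvPolynomial σ R :=
  ∑ i, C (r i) * X i

noncomputable def orPoly (r : κ → σ → R) : MvPolynomial σ R :=
  1 - ∏ j, (1 - linearForm (r j))

lemma totalDegree_linearForm_le (r : σ → R) : (linearForm r).totalDegree ≤ 1 :=
  (IsHomogeneous.sum _ _ _ fun i _ => isHomogeneous_C_mul_X (r i) i).totalDegree_le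

lemma totalDegree_orPoly_le (r : κ → σ → R) : (orPoly r).totalDegree ≤ Fintype.card κ :=
  calc (orPoly r).totalDegree ≤ ∑ j, (1 - linearForm (r j)).totalDegree :=
        (totalDegree_one_sub_le _).trans (totalDegree_finsetProd _ _)
    _ ≤ ∑ _j : κ, 1 :=
        Finset.sum_le_sum fun j _ => (totalDegree_one_sub_le _).trans (totalDegree_linearForm_le _)
    _ = Fintype.card κ := by simp

lemma eval_orPoly (r : κ → σ → R) (b : σ → R) :
    eval b (orPoly r) = 1 - ∏ j, (1 - r j ⬝ᵥ b) := by
  simp [orPoly, linearForm, dotProduct]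

end OrPolynomial

lemma ZMod.one_sub_prod_one_sub_eq_ite {κ : Type*} [Fintype κ] (a : κ → ZMod 2) :
    1 - ∏ j, (1 - a j) = if ∀ j, a j = 0 then 0 else 1 := by
  split_ifs with h
  · simp [h]
  · push Not at h
    obtain ⟨j, hj⟩ := h
    have hj : a j = 1 := by revert hj; generalize a j = c; revert c; decide
    rw [Finset.prod_eq_zero (Finset.mem_univ j) (by rw [hj, sub_self]), sub_zero]

def bits {m : ℕ} (x : Fin m → Bool) : Fin m → ZMod 2 :=
  fun i => if x i then 1 else 0

lemma evalBool_eq_eval_bits {m : ℕ} (P : MvPolynomial (Fin m) (ZMod 2)) (x : Fin m → Bool) :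
    evalBool P x = eval (bits x) P :=
  rfl

lemma ORval_eq_ite {m : ℕ} (x : Fin m → Bool) : ORval m x = if bits x = 0 then 0 else 1 := by
  by_cases h : ∃ i, x i = true <;> simp_all [ORval, bits, funext_iff]

lemma evalBool_orPoly_ne_ORval_iff {κ : Type*} [Fintype κ] {m : ℕ} (r : κ → Fin m → ZMod 2)
    (x : Fin m → Bool) :
    evalBool (orPoly r) x ≠ ORval m x ↔ bits x ≠ 0 ∧ ∀ j, r j ⬝ᵥ bits x = 0 := by
  rw [evalBool_eq_eval_bits, eval_orPoly, ZMod.one_sub_prod_one_sub_eq_ite, ORval_eq_ite]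
  by_cases hx : bits x = 0 <;> simp [hx]

lemma card_filter_evalBool_orPoly_ne_ORval_mul_le {κ : Type*} [Fintype κ] [DecidableEq κ] {m : ℕ}
    (x : Fin m → Bool) :
    #{r : κ → Fin m → ZMod 2 | evalBool (orPoly r) x ≠ ORval m x} * 2 ^ Fintype.card κ ≤
      Fintype.card (κ → Fin m → ZMod 2) := by
  simp_rw [evalBool_orPoly_ne_ORval_iff]
  by_cases hx : bits x = 0
  · simp [hx]
  · simpa [hx] using (card_filter_forall_dotProduct_eq_zero_mul (κ := κ) hx).le

lemma Real.le_pow_natCeil_logb {b x : ℝ} (hb : 1 < b) (hx : 0 < x) : x ≤ b ^ ⌈logb b x⌉₊ := by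
  rw [← rpow_natCast, ← logb_le_iff_le_rpow hb hx]
  exact Nat.le_ceil _

lemma one_sub_le_sum_uniform_filter {Ω : Type*} [Fintype Ω] [Nonempty Ω] (p : Ω → Prop)
    [DecidablePred p] {δ : ℝ} (h : (#{ω | ¬p ω} : ℝ) ≤ δ * Fintype.card Ω) :
    1 - δ ≤ ∑ _i ∈ {i | p ((Fintype.equivFin Ω).symm i)}, ((Fintype.card Ω : ℝ))⁻¹ := by
  have hcard : #{i | p ((Fintype.equivFin Ω).symm i)} = #{ω | p ω} :=
    Finset.card_equiv (Fintype.equivFin Ω).symm (by simp)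
  have hsplit := Finset.card_filter_add_card_filter_not (s := univ) p
  have hpos : (0 : ℝ) < Fintype.card Ω := by exact_mod_cast Fintype.card_pos
  rw [sum_const, nsmul_eq_mul, hcard, ← div_eq_mul_inv, le_div_iff₀ hpos]
  rw [card_univ] at hsplit
  have : (#{ω | p ω} : ℝ) + #{ω | ¬p ω} = Fintype.card Ω := by exact_mod_cast hsplit
  linarith

theorem stmt_15_general (m : ℕ) (ε : ℝ) (hε0 : 0 < ε) :
    ∃ (N : ℕ) (μ : Fin N → ℝ) (P : Fin N → MvPolynomial (Fin m) (ZMod 2)),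
      (∀ ω, 0 ≤ μ ω) ∧ (∑ ω, μ ω = 1) ∧
      (∀ ω, (P ω).totalDegree ≤ ⌈Real.logb 2 (1 / ε)⌉₊) ∧
      ∀ x : Fin m → Bool,
        1 - ε ≤ ∑ ω ∈ {ω | evalBool (P ω) x = ORval m x}, μ ω := by
  set k := ⌈Real.logb 2 (1 / ε)⌉₊
  let Ω := Fin k → Fin m → ZMod 2
  refine ⟨Fintype.card Ω, fun _ => (Fintype.card Ω : ℝ)⁻¹,
    fun i => orPoly ((Fintype.equivFin Ω).symm i), fun _ => by positivity, by simp,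
    fun _ => (totalDegree_orPoly_le _).trans_eq (Fintype.card_fin k), fun x => ?_⟩
  apply one_sub_le_sum_uniform_filter (fun r : Ω => evalBool (orPoly r) x = ORval m x)
  have hcount : (#{r : Ω | evalBool (orPoly r) x ≠ ORval m x} : ℝ) * 2 ^ k ≤ Fintype.card Ω := by
    exact_mod_cast Fintype.card_fin k ▸ card_filter_evalBool_orPoly_ne_ORval_mul_le x
  have h2k : 1 ≤ 2 ^ k * ε :=
    (div_le_iff₀ hε0).mp (Real.le_pow_natCeil_logb one_lt_two (by positivity))
  nlinarith [mul_le_mul_of_nonneg_right hcount hε0.le]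

theorem stmt_15 (m : ℕ) (hm : 1 ≤ m) (ε : ℝ) (hε0 : 0 < ε) (hε1 : ε < 1) :
    ∃ (N : ℕ) (μ : Fin N → ℝ) (P : Fin N → MvPolynomial (Fin m) (ZMod 2)),
      (∀ ω, 0 ≤ μ ω) ∧ (∑ ω, μ ω = 1) ∧
      (∀ ω, (P ω).totalDegree ≤ ⌈Real.logb 2 (1 / ε)⌉₊) ∧
      ∀ x : Fin m → Bool,
        1 - ε ≤ ∑ ω ∈ {ω | evalBool (P ω) x = ORval m x}, μ ω :=
  stmt_15_general m ε hε0
end
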